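/- The reversal map R, defined on words by R(a₁a₂⋯a_n)=a_n a_{n−1}⋯a₁ and R(1)=1, is an algebra automorphism of both (k⟨A⟩,*) and (k⟨A⟩,⋆): R(u * v) = R(u) * R(v) and R(u ⋆ v) = R(u) ⋆ R(v) for all u,v ∈ k⟨A⟩. -/

import Mathlib

/-!
Setting (Hoffman–Ihara, "Quasi-shuffle products revisited"):
`k` is a field containing `ℚ`, `A` a countable set of letters, `kA` the `k`-vector space
with basis `A` equipped with an associative commutative bilinear product `⋄` (given below as
a bilinear map `d`), and `k⟨A⟩` the noncommutative polynomial algebra on `A`, realized as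
the monoid algebra of the free monoid of words on `A`.
-/

noncomputable section

open scoped BigOperators TensorProduct

section QuasiShuffle

variable (k A : Type*) [Field k] [CharZero k] [Countable A]

/-- `k⟨A⟩`, the noncommutative polynomial algebra on `A`: the `k`-vector space with basis
the words in `A`, with concatenation product and unit the empty word. -/
abbrev KAlg : Type _ := MonoidAlgebra k (FreeMonoid A)

/-- `kA`, the `k`-vector space with basis `A`. -/
abbrev KA : Type _ := A →₀ k

variable {k A}

/-- The basis element of `k⟨A⟩` corresponding to a word. -/
def word (w : List A) : KAlg k A := MonoidAlgebra.of k (FreeMonoid A) (FreeMonoid.ofList w)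

/-- Linear extension to `k⟨A⟩` of a function defined on words. -/
def liftW {N : Type*} [AddCommMonoid N] [Module k N] (g : List A → N) :
    KAlg k A →ₗ[k] N :=
  Finsupp.lsum k (fun w => LinearMap.toSpanSingleton k N (g (FreeMonoid.toList w))) ∘ₗ
    (MonoidAlgebra.coeffLinearEquiv k).toLinearMap

/-- The inclusion of `kA` into `k⟨A⟩` (letters as one-letter words). -/
def incl : KA k A →ₗ[k] KAlg k A :=
  Finsupp.lsum k fun a => LinearMap.toSpanSingleton k (KAlg k A) (word [a])

/-- The reversal map `R`, `R(a₁a₂⋯aₙ) = aₙ⋯a₂a₁` on words. -/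
def Rmap : KAlg k A →ₗ[k] KAlg k A :=
  liftW fun w => word w.reverse


set_option linter.unusedSectionVars false

lemma word_mul (u v : List A) : (word u : KAlg k A) * word v = word (u ++ v) := by
  simp [word, ← map_mul]

lemma word_single (w : List A) :
    (word w : KAlg k A) = MonoidAlgebra.single (FreeMonoid.ofList w) 1 := rfl

lemma liftW_word {N : Type*} [AddCommMonoid N] [Module k N] (g : List A → N) (w : List A) :
    (liftW g : KAlg k A →ₗ[k] N) (word w) = g w := by
  simp [liftW, word_single, MonoidAlgebra.coeffLinearEquiv, MonoidAlgebra.coeff_single, Finsupp.lsum, LinearMap.toSpanSingleton]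

lemma Rmap_word (w : List A) : Rmap (word w : KAlg k A) = word w.reverse :=
  liftW_word _ w

lemma single_eq_smul_word (m : FreeMonoid A) (r : k) :
    (MonoidAlgebra.single m r : KAlg k A) = r • word m.toList := by
  rw [word_single, MonoidAlgebra.smul_single', mul_one]
  simp

lemma incl_single (a : A) (r : k) : incl (Finsupp.single a r) = r • (word [a] : KAlg k A) := by
  simp [incl, Finsupp.lsum, LinearMap.toSpanSingleton]

lemma Rmap_letter_mul (a : A) (x : KAlg k A) :
    Rmap (word [a] * x) = Rmap x * word [a] := by
  induction x using MonoidAlgebra.induction_linear with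
  | zero => simp
  | add f g hf hg => simp [mul_add, add_mul, map_add, hf, hg]
  | single m r =>
      rw [single_eq_smul_word]
      simp only [mul_smul_comm, smul_mul_assoc, map_smul]
      rw [word_mul, Rmap_word, Rmap_word, word_mul]
      simp

lemma Rmap_incl_mul (x : KA k A) (y : KAlg k A) :
    Rmap (incl x * y) = Rmap y * incl x := by
  induction x using Finsupp.induction_linear with
  | zero => simp
  | add f g hf hg => simp [map_add, add_mul, mul_add, hf, hg]
  | single a r =>
      rw [incl_single, smul_mul_assoc, map_smul, Rmap_letter_mul, mul_smul_comm]

lemma word_nil : (word [] : KAlg k A) = 1 := map_one _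

lemma mul_word_word (x : KAlg k A) (u v : List A) :
    x * word u * word v = x * word (u ++ v) := by
  rw [mul_assoc, word_mul]

lemma key_tail (d : KA k A →ₗ[k] KA k A →ₗ[k] KA k A)
    (m : KAlg k A →ₗ[k] KAlg k A →ₗ[k] KAlg k A) (ε : k)
    (h1 : ∀ x, m (word []) x = x) (h2 : ∀ x, m x (word []) = x)
    (hrec : ∀ (a b : A) (w v : List A),
      m (word (a :: w)) (word (b :: v)) =
        word [a] * m (word w) (word (b :: v)) + word [b] * m (word (a :: w)) (word v) +
          ε • (incl (d (Finsupp.single a 1) (Finsupp.single b 1)) * m (word w) (word v))) :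
    ∀ (n : ℕ) (w v : List A) (a b : A), w.length + v.length ≤ n →
      m (word (w ++ [a])) (word (v ++ [b])) =
        m (word w) (word (v ++ [b])) * word [a] + m (word (w ++ [a])) (word v) * word [b] +
          ε • (m (word w) (word v) * incl (d (Finsupp.single a 1) (Finsupp.single b 1))) := by
  intro n
  induction n with
  | zero =>
      intro w v a b h
      have hw : w = [] := by cases w <;> simp_all
      have hv : v = [] := by cases v <;> simp_all
      subst hw; subst hv
      simp only [List.nil_append]
      rw [hrec a b [] []]
      simp only [h1, h2]
      rw [word_nil]
      simp only [mul_one, one_mul]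
      module
  | succ n ih =>
      intro w v a b h
      match w, v with
      | [], [] =>
          simp only [List.nil_append]
          rw [hrec a b [] []]
          simp only [h1, h2]
          rw [word_nil]
          simp only [mul_one, one_mul]
          module
      | [], e :: v' =>
          simp only [List.nil_append, List.cons_append] at h ⊢
          have i1 := ih [] v' a b (by simp only [List.length_nil, List.length_cons] at h ⊢; omega)
          simp only [List.nil_append] at i1
          rw [hrec a e [] (v' ++ [b]), i1, hrec a e [] v']
          simp only [h1, mul_add, add_mul, smul_add, mul_smul_comm, smul_mul_assoc, smul_smul,
            ← mul_assoc, word_mul, mul_word_word, List.cons_append, List.nil_append,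
            List.append_assoc]
          module
      | c :: w', [] =>
          simp only [List.cons_append, List.nil_append] at h ⊢
          have i1 := ih w' [] a b (by simp only [List.length_nil, List.length_cons] at h ⊢; omega)
          simp only [List.nil_append] at i1
          rw [hrec c b (w' ++ [a]) [], i1, hrec c b w' []]
          simp only [h2, mul_add, add_mul, smul_add, mul_smul_comm, smul_mul_assoc, smul_smul,
            ← mul_assoc, word_mul, mul_word_word, List.cons_append, List.nil_append,
            List.append_assoc]
          module
      | c :: w', e :: v' =>
          simp only [List.cons_append] at h ⊢
          have i1 := ih w' (e :: v') a b
            (by simp only [List.length_nil, List.length_cons] at h ⊢; omega)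
          have i2 := ih (c :: w') v' a b
            (by simp only [List.length_nil, List.length_cons] at h ⊢; omega)
          have i3 := ih w' v' a b
            (by simp only [List.length_nil, List.length_cons] at h ⊢; omega)
          simp only [List.cons_append] at i1 i2 i3
          rw [hrec c e (w' ++ [a]) (v' ++ [b]), i1, i2, i3,
            hrec c e w' (v' ++ [b]), hrec c e (w' ++ [a]) v', hrec c e w' v']
          simp only [mul_add, add_mul, smul_add, mul_smul_comm, smul_mul_assoc, smul_smul,
            ← mul_assoc, word_mul, mul_word_word, List.cons_append, List.nil_append,
            List.append_assoc]
          module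

lemma key_rev (d : KA k A →ₗ[k] KA k A →ₗ[k] KA k A)
    (m : KAlg k A →ₗ[k] KAlg k A →ₗ[k] KAlg k A) (ε : k)
    (h1 : ∀ x, m (word []) x = x) (h2 : ∀ x, m x (word []) = x)
    (hrec : ∀ (a b : A) (w v : List A),
      m (word (a :: w)) (word (b :: v)) =
        word [a] * m (word w) (word (b :: v)) + word [b] * m (word (a :: w)) (word v) +
          ε • (incl (d (Finsupp.single a 1) (Finsupp.single b 1)) * m (word w) (word v))) :
    ∀ (n : ℕ) (w v : List A), w.length + v.length ≤ n →
      Rmap (m (word w) (word v)) = m (word w.reverse) (word v.reverse) := by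
  intro n
  induction n with
  | zero =>
      intro w v h
      have hw : w = [] := by cases w <;> simp_all
      have hv : v = [] := by cases v <;> simp_all
      subst hw; subst hv
      rw [h1, Rmap_word]
      simp [h1]
  | succ n ih =>
      intro w v h
      match w, v with
      | [], v => rw [h1, Rmap_word]; simp [h1]
      | a :: w', [] => rw [h2, Rmap_word]; simp [h2]
      | a :: w', b :: v' =>
          simp only [List.length_cons] at h
          have i1 := ih w' (b :: v') (by simp only [List.length_cons]; omega)
          have i2 := ih (a :: w') v' (by simp only [List.length_cons]; omega)
          have i3 := ih w' v' (by omega)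
          simp only [List.reverse_cons] at i1 i2 i3
          have t := key_tail d m ε h1 h2 hrec (w'.reverse.length + v'.reverse.length)
            w'.reverse v'.reverse a b le_rfl
          rw [hrec a b w' v', map_add, map_add, map_smul, Rmap_letter_mul, Rmap_letter_mul,
            Rmap_incl_mul, i1, i2, i3]
          simp only [List.reverse_cons]
          rw [t]

lemma key_all (d : KA k A →ₗ[k] KA k A →ₗ[k] KA k A)
    (m : KAlg k A →ₗ[k] KAlg k A →ₗ[k] KAlg k A) (ε : k)
    (h1 : ∀ x, m (word []) x = x) (h2 : ∀ x, m x (word []) = x)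
    (hrec : ∀ (a b : A) (w v : List A),
      m (word (a :: w)) (word (b :: v)) =
        word [a] * m (word w) (word (b :: v)) + word [b] * m (word (a :: w)) (word v) +
          ε • (incl (d (Finsupp.single a 1) (Finsupp.single b 1)) * m (word w) (word v))) :
    ∀ u v, Rmap (m u v) = m (Rmap u) (Rmap v) := by
  intro u v
  induction u using MonoidAlgebra.induction_linear with
  | zero => simp
  | add f g hf hg => simp only [map_add, LinearMap.add_apply, hf, hg]
  | single s r =>
      induction v using MonoidAlgebra.induction_linear with
      | zero => simp
      | add f g hf hg => simp only [map_add, hf, hg]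
      | single t q =>
          rw [single_eq_smul_word s r, single_eq_smul_word t q]
          simp only [map_smul, LinearMap.smul_apply]
          rw [key_rev d m ε h1 h2 hrec (s.toList.length + t.toList.length) _ _ le_rfl,
            Rmap_word, Rmap_word]


/-- Proposition 4.3 of Hoffman–Ihara: the reversal map `R` is an
algebra automorphism of both `(k⟨A⟩,*)` and `(k⟨A⟩,⋆)`. -/
theorem Rmap_automorphism
    {k A : Type*} [Field k] [CharZero k] [Countable A]
    (d : KA k A →ₗ[k] KA k A →ₗ[k] KA k A)
    (hd_comm : ∀ x y, d x y = d y x)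
    (hd_assoc : ∀ x y z, d (d x y) z = d x (d y z))
    (mS : KAlg k A →ₗ[k] KAlg k A →ₗ[k] KAlg k A)
    (hS_one_left : ∀ x, mS (word []) x = x)
    (hS_one_right : ∀ x, mS x (word []) = x)
    (hS_rec : ∀ (a b : A) (w v : List A),
      mS (word (a :: w)) (word (b :: v)) =
        word [a] * mS (word w) (word (b :: v)) + word [b] * mS (word (a :: w)) (word v) +
          incl (d (Finsupp.single a 1) (Finsupp.single b 1)) * mS (word w) (word v))
    (mT : KAlg k A →ₗ[k] KAlg k A →ₗ[k] KAlg k A)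
    (hT_one_left : ∀ x, mT (word []) x = x)
    (hT_one_right : ∀ x, mT x (word []) = x)
    (hT_rec : ∀ (a b : A) (w v : List A),
      mT (word (a :: w)) (word (b :: v)) =
        word [a] * mT (word w) (word (b :: v)) + word [b] * mT (word (a :: w)) (word v) -
          incl (d (Finsupp.single a 1) (Finsupp.single b 1)) * mT (word w) (word v))
    :
    (∀ u v, Rmap (mS u v) = mS (Rmap u) (Rmap v)) ∧
    (∀ u v, Rmap (mT u v) = mT (Rmap u) (Rmap v)) := by
  refine ⟨key_all d mS 1 hS_one_left hS_one_right ?_,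
    key_all d mT (-1) hT_one_left hT_one_right ?_⟩
  · intro a b w v
    rw [hS_rec a b w v, one_smul]
  · intro a b w v
    rw [hT_rec a b w v]
    module

end QuasiShuffle
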